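/- Explicit preimage of a permutation under the string-to-permutation map: let σ ∈ S_n have descent set D(σ) = {n₁ < n₂ < … < n_d}, set n₀ = 0 and n_{d+1} = n, let 𝒜 = {0 < 1 < … < d}, and let ω = 0^{n₁−n₀} 1^{n₂−n₁} ⋯ d^{n_{d+1}−n_d} ∈ 𝒜ⁿ be the weakly increasing string in which the letter r occurs n_{r+1} − n_r times. Then the string λ ∈ 𝒜ⁿ defined by λ_{σ(i)} = ω_i for i = 1,…,n satisfies f_𝒜(λ) = σ, and the weakly increasing rearrangement of λ is ω. -/

import Mathlib

noncomputable section

/-- `σ` fixes all positions `≥ n` (i.e. `σ ∈ S_n ⊆ S_∞`, positions 0-indexed). -/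
def IsPermOn (n : ℕ) (σ : Equiv.Perm ℕ) : Prop := ∀ a, n ≤ a → σ a = a

/-- `τ` is the standardization of the string `w`; the map `f_𝒜` sends `w` to `τ⁻¹`. -/
def IsStandardization {A : Type*} [LinearOrder A] {n : ℕ} (w : Fin n → A)
    (τ : Equiv.Perm ℕ) : Prop :=
  IsPermOn n τ ∧ ∀ p q : Fin n, p < q → (w p ≤ w q ↔ τ (p : ℕ) < τ (q : ℕ))

/-- The descent set of `σ ∈ S_n` as a finset (0-indexed: `a` corresponds to the
1-indexed descent `a + 1`). -/
def descFinset (n : ℕ) (σ : Equiv.Perm ℕ) : Finset ℕ :=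
  (Finset.range n).filter fun a => σ (a + 1) < σ a

/-!
Since `λ ∘ σ = ω`, the string `λ` is a rearrangement of `ω`. The letter `ω_i` counts the
descents of `σ` before `i`, so it is constant exactly on the ascending runs of `σ`; hence among
equal letters of `λ` the standardization orders positions as `σ⁻¹` does, and strictly different
letters are ordered as `ω` is, i.e. again as `σ⁻¹`.
-/

/-- The letter `ω` of the paper at the 0-indexed position `i`. -/
def descentsBelow (n : ℕ) (σ : Equiv.Perm ℕ) (i : ℕ) : ℕ :=
  ((descFinset n σ).filter fun a => a < i).card

namespace IsPermOn

variable {n : ℕ} {σ : Equiv.Perm ℕ}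

theorem inv (h : IsPermOn n σ) : IsPermOn n σ⁻¹ := fun a ha => by
  rw [Equiv.Perm.inv_eq_iff_eq, h a ha]

theorem apply_lt (h : IsPermOn n σ) {a : ℕ} (ha : a < n) : σ a < n := by
  by_contra! hle
  have : σ a = a := σ.injective (h _ hle)
  omega

def finPerm (h : IsPermOn n σ) : Equiv.Perm (Fin n) where
  toFun p := ⟨σ p, h.apply_lt p.2⟩
  invFun p := ⟨σ⁻¹ p, h.inv.apply_lt p.2⟩
  left_inv p := by simp
  right_inv p := by simp

theorem map_univ_comp {β : Type*} (h : IsPermOn n σ) (g : ℕ → β) :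
    Multiset.map (fun p : Fin n => g (σ p)) Finset.univ.val
      = Multiset.map (fun p : Fin n => g p) Finset.univ.val := by
  conv_rhs => rw [← Multiset.map_univ_val_equiv h.finPerm, Multiset.map_map]
  rfl

end IsPermOn

section descentsBelow

variable {n : ℕ} {σ : Equiv.Perm ℕ}

theorem descentsBelow_mono : Monotone (descentsBelow n σ) := fun _ _ hij =>
  Finset.card_le_card <| Finset.monotone_filter_right _ fun _ _ h => h.trans_le hij

theorem descentsBelow_lt_of_mem {a i j : ℕ} (ha : a ∈ descFinset n σ) (hia : i ≤ a)
    (haj : a < j) : descentsBelow n σ i < descentsBelow n σ j := by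
  refine Finset.card_lt_card <| (Finset.ssubset_iff_of_subset <|
    Finset.monotone_filter_right _ fun _ _ h => by omega).mpr ⟨a, ?_, ?_⟩
  · exact Finset.mem_filter.mpr ⟨ha, haj⟩
  · exact fun hmem => (Finset.mem_filter.mp hmem).2.not_ge hia

theorem apply_lt_apply_of_forall_notMem_descFinset {i j : ℕ} (hij : i < j) (hjn : j ≤ n)
    (h : ∀ a, i ≤ a → a < j → a ∉ descFinset n σ) : σ i < σ j := by
  have ascent : StrictMonoOn σ (Set.Icc i j) := by
    refine strictMonoOn_of_lt_add_one Set.ordConnected_Icc fun a _ ⟨hia, _⟩ ⟨_, haj⟩ => ?_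
    have hnot : ¬ σ (a + 1) < σ a := fun hlt =>
      h a hia haj (Finset.mem_filter.mpr ⟨Finset.mem_range.mpr (by omega), hlt⟩)
    exact (not_lt.mp hnot).lt_of_ne (σ.injective.ne (by omega))
  exact ascent ⟨le_rfl, hij.le⟩ ⟨hij.le, le_rfl⟩ hij

/-- Positions carrying the same letter of `ω` are separated by no descent, so `σ` increases
between them. -/
theorem descentsBelow_le_descentsBelow_iff {i j : ℕ} (hi : i < n) (hσ : σ i < σ j) :
    descentsBelow n σ i ≤ descentsBelow n σ j ↔ i < j := by
  refine ⟨fun hle => ?_, fun hij => descentsBelow_mono hij.le⟩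
  by_contra! hji
  obtain rfl | hji := hji.eq_or_lt
  · exact lt_irrefl _ hσ
  by_cases hdesc : ∃ a ∈ descFinset n σ, j ≤ a ∧ a < i
  · obtain ⟨a, ha, hja, hai⟩ := hdesc
    exact (descentsBelow_lt_of_mem ha hja hai).not_ge hle
  · exact (apply_lt_apply_of_forall_notMem_descFinset hji hi.le
      fun a hja hai ha => hdesc ⟨a, ha, hja, hai⟩).not_gt hσ

end descentsBelow

/-- **Explicit preimage of a permutation under the string-to-permutation map.**
Let `σ ∈ S_n` have descent set `D(σ) = {n₁ < ⋯ < n_d}`, and let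
`ω ∈ {0, …, d}ⁿ` be the weakly increasing string whose letter at position `p` is the
number of descents `< p + 1` (so that the letter `r` occurs `n_{r+1} − n_r` times).
Then the string `λ` defined by `λ_{σ(i)} = ω_i`, i.e. `λ_p = ω_{σ⁻¹(p)}`, satisfies
`f(λ) = σ`, and the weakly increasing rearrangement of `λ` is `ω` (i.e. `ω` is weakly
increasing and `λ`, `ω` have the same multiset of letters). -/
theorem explicit_preimage_of_permutation
    (n : ℕ) (σ : Equiv.Perm ℕ) (hσ : IsPermOn n σ) :
    -- ω, read at `Fin n` positions
    (Monotone fun p : Fin n =>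
      ((descFinset n σ).filter fun a => a < (p : ℕ)).card) ∧
    -- same content
    (Multiset.map
        (fun p : Fin n =>
          ((descFinset n σ).filter fun a => a < σ⁻¹ (p : ℕ)).card)
        Finset.univ.val
      = Multiset.map
        (fun p : Fin n =>
          ((descFinset n σ).filter fun a => a < (p : ℕ)).card)
        Finset.univ.val) ∧
    -- f(λ) = σ
    (∃ τ : Equiv.Perm ℕ,
      IsStandardization
        (fun p : Fin n =>
          ((descFinset n σ).filter fun a => a < σ⁻¹ (p : ℕ)).card) τ ∧
      τ⁻¹ = σ) := by
  refine ⟨descentsBelow_mono.comp Fin.val_strictMono.monotone,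
    hσ.inv.map_univ_comp (descentsBelow n σ), σ⁻¹, ⟨hσ.inv, fun p q hpq => ?_⟩, inv_inv σ⟩
  exact descentsBelow_le_descentsBelow_iff (hσ.inv.apply_lt p.2) (by simpa using hpq)
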